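/- arXiv:1903.06591 — 3 statements merged into one kernel-verified Lean document; each statement's English description precedes it below -/
import Mathlib

section
/- For a probability measure p and measurable sets A, B, the Chung–Erdős inequality holds: p(A ∪ B) ≥ (p(A) + p(B))² / (p(A) + p(B) + 2·p(A ∩ B)), provided the denominator is nonzero. -/
open MeasureTheory

theorem stmt_1 {Ω : Type*} [MeasurableSpace Ω] (p : Measure Ω) [IsProbabilityMeasure p]
    (A B : Set Ω) (hA : MeasurableSet A) (hB : MeasurableSet B)
    (hden : (p A).toReal + (p B).toReal + 2 * (p (A ∩ B)).toReal ≠ 0) :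
    (p (A ∪ B)).toReal ≥
      ((p A).toReal + (p B).toReal) ^ 2 /
        ((p A).toReal + (p B).toReal + 2 * (p (A ∩ B)).toReal) := by
  have hfin : ∀ s : Set Ω, p s ≠ ⊤ := fun s => measure_ne_top p s
  have hie : p (A ∪ B) + p (A ∩ B) = p A + p B := measure_union_add_inter A hB
  have hie' : (p (A ∪ B)).toReal + (p (A ∩ B)).toReal = (p A).toReal + (p B).toReal := by
    rw [← ENNReal.toReal_add (hfin _) (hfin _), ← ENNReal.toReal_add (hfin _) (hfin _), hie]
  have hca : (p (A ∩ B)).toReal ≤ (p A).toReal :=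
    ENNReal.toReal_mono (hfin _) (measure_mono Set.inter_subset_left)
  have hcb : (p (A ∩ B)).toReal ≤ (p B).toReal :=
    ENNReal.toReal_mono (hfin _) (measure_mono Set.inter_subset_right)
  have hc : 0 ≤ (p (A ∩ B)).toReal := ENNReal.toReal_nonneg
  have hden' : 0 < (p A).toReal + (p B).toReal + 2 * (p (A ∩ B)).toReal := by
    rcases lt_or_eq_of_le (by positivity : (0:ℝ) ≤ (p A).toReal + (p B).toReal + 2 * (p (A ∩ B)).toReal) with h | h
    · exact h
    · exact absurd h.symm hden
  rw [ge_iff_le, div_le_iff₀ hden']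
  nlinarith [sq_nonneg ((p A).toReal + (p B).toReal - 2 * (p (A ∩ B)).toReal)]
end

section
/- Let D(h₁,h₂) = Π(h₁ ⊔ h₂) − Π(h₁) − Π(h₂) + Π(h₁ ⊓ h₂). Then the commutator satisfies [Π(h₁), Π(h₂)] = D(h₁,h₂)·(Π(h₁) − Π(h₂)). -/
variable {H : Type*} [NormedAddCommGroup H] [InnerProductSpace ℂ H] [FiniteDimensional ℂ H]

/-- The orthogonal projection onto a subspace, as an operator on `H`. -/
noncomputable def projOp (h : Submodule ℂ H) : H →ₗ[ℂ] H :=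
  (h.subtypeL.comp (h.orthogonalProjection)).toLinearMap

/-- The quantum correction operator `D(h₁,h₂)`. -/
noncomputable def Dop (h₁ h₂ : Submodule ℂ H) : H →ₗ[ℂ] H :=
  projOp (h₁ ⊔ h₂) - projOp h₁ - projOp h₂ + projOp (h₁ ⊓ h₂)

/-
`s` acts as the identity on the ranges of `p` and `q`, so `s * (p - q) = p - q`, while
`i` factors through both, so `i * (p - q) = 0`; what is left of the right side is `p * q - q * p`.
-/
theorem IsIdempotentElem.commutator_eq_mul_sub {R : Type*} [Ring R] {p q s i : R}
    (hp : IsIdempotentElem p) (hq : IsIdempotentElem q) (hsp : s * p = p) (hsq : s * q = q)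
    (hip : i * p = i) (hiq : i * q = i) :
    p * q - q * p = (s - p - q + i) * (p - q) := by
  simp only [mul_sub, sub_mul, add_mul, hsp, hsq, hip, hiq, hp.eq, hq.eq]
  abel

section projOp

variable {a b : Submodule ℂ H}

theorem projOp_mul_projOp_of_le (hab : a ≤ b) : projOp a * projOp b = projOp a := by
  ext x
  exact congrArg Subtype.val (Submodule.orthogonalProjectionOnto_starProjection_of_le hab x)

theorem projOp_mul_projOp_of_le' (hab : a ≤ b) : projOp b * projOp a = projOp a := by
  ext x
  exact Submodule.starProjection_eq_self_iff.2 (hab (a.starProjection_apply_mem x))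

theorem isIdempotentElem_projOp (h : Submodule ℂ H) : IsIdempotentElem (projOp h) :=
  projOp_mul_projOp_of_le le_rfl

end projOp

theorem stmt_5 (h₁ h₂ : Submodule ℂ H) :
    projOp h₁ ∘ₗ projOp h₂ - projOp h₂ ∘ₗ projOp h₁ =
      Dop h₁ h₂ ∘ₗ (projOp h₁ - projOp h₂) :=
  (isIdempotentElem_projOp h₁).commutator_eq_mul_sub (isIdempotentElem_projOp h₂)
    (projOp_mul_projOp_of_le' le_sup_left) (projOp_mul_projOp_of_le' le_sup_right)
    (projOp_mul_projOp_of_le inf_le_left) (projOp_mul_projOp_of_le inf_le_right)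
end

section
/- For subspaces h₁A of H_A and h₁B, h₂B of H_B, the tensor-product subspaces satisfy h₁A ⊗ (h₁B ⊓ h₂B) = (h₁A ⊗ h₁B) ⊓ (h₁A ⊗ h₂B) inside H_A ⊗ H_B. -/
/-!
Over a field every module is flat. Tensoring the exact sequence
`0 → v ⊓ w → H_B → H_B ⧸ v × H_B ⧸ w` with `u` shows that `u ⊗ (v ⊓ w)` is the intersection of
`u ⊗ v` and `u ⊗ w` inside `u ⊗ H_B`, and this intersection survives the injective map
`u ⊗ H_B → H_A ⊗ H_B`.
-/

open scoped TensorProduct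

variable {HA HB : Type*} [NormedAddCommGroup HA] [InnerProductSpace ℂ HA]
  [FiniteDimensional ℂ HA] [NormedAddCommGroup HB] [InnerProductSpace ℂ HB]
  [FiniteDimensional ℂ HB]

/-- The subspace of `HA ⊗ HB` spanned by elementary tensors `a ⊗ b` with `a ∈ u`, `b ∈ v`. -/
def tensorSub (u : Submodule ℂ HA) (v : Submodule ℂ HB) : Submodule ℂ (HA ⊗[ℂ] HB) :=
  Submodule.span ℂ {x | ∃ a ∈ u, ∃ b ∈ v, x = a ⊗ₜ[ℂ] b}

open Module LinearMap TensorProduct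

section

variable {R M N : Type*} [CommRing R] [AddCommGroup M] [Module R M] [AddCommGroup N] [Module R N]

theorem ker_lTensor_prod {P Q : Type*} [AddCommGroup P] [Module R P] [AddCommGroup Q] [Module R Q]
    (f : N →ₗ[R] P) (g : N →ₗ[R] Q) :
    ker ((f.prod g).lTensor M) = ker (f.lTensor M) ⊓ ker (g.lTensor M) := by
  have : (prodRight R R M P Q).toLinearMap ∘ₗ (f.prod g).lTensor M =
      (f.lTensor M).prod (g.lTensor M) := by
    ext m n <;> simp
  rw [← ker_prod, ← this, ker_comp, LinearEquiv.ker, Submodule.comap_bot]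

theorem range_lTensor_subtype_inf [Flat R M] (v w : Submodule R N) :
    range ((v ⊓ w).subtype.lTensor M) =
      range (v.subtype.lTensor M) ⊓ range (w.subtype.lTensor M) := by
  have hexact : Function.Exact (v ⊓ w).subtype (v.mkQ.prod w.mkQ) := by
    rw [exact_iff, ker_prod, Submodule.ker_mkQ, Submodule.ker_mkQ, Submodule.range_subtype]
  rw [← exact_iff.mp (Flat.lTensor_exact M hexact), ker_lTensor_prod,
    exact_iff.mp (lTensor_exact M (exact_subtype_mkQ v) v.mkQ_surjective),
    exact_iff.mp (lTensor_exact M (exact_subtype_mkQ w) w.mkQ_surjective)]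

theorem range_mapIncl_inf (u : Submodule R M) [Flat R u] [Flat R N] (v w : Submodule R N) :
    range (mapIncl u (v ⊓ w)) = range (mapIncl u v) ⊓ range (mapIncl u w) := by
  simp only [mapIncl, ← rTensor_comp_lTensor, range_comp, range_lTensor_subtype_inf]
  exact Submodule.map_inf _ (Flat.rTensor_preserves_injective_linearMap _ u.injective_subtype)

end

theorem tensorSub_eq_range_mapIncl {E F : Type*} [NormedAddCommGroup E] [InnerProductSpace ℂ E]
    [NormedAddCommGroup F] [InnerProductSpace ℂ F] (u : Submodule ℂ E) (v : Submodule ℂ F) :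
    tensorSub u v = range (mapIncl u v) := by
  rw [tensorSub, range_map_eq_span_tmul]
  congr
  ext x
  simp [eq_comm]

theorem stmt_12 (h1A : Submodule ℂ HA) (h1B h2B : Submodule ℂ HB) :
    tensorSub h1A (h1B ⊓ h2B) = tensorSub h1A h1B ⊓ tensorSub h1A h2B := by
  simp only [tensorSub_eq_range_mapIncl]
  exact range_mapIncl_inf h1A h1B h2B
end
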